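/- For all real numbers a and b, the set of complex solutions z of conj(z)^4 = z^2 + a*z + b is finite, and its cardinality is at least 4 and at most 10. -/

import Mathlib

/-!
Write `z = x + iy`. The imaginary part of the equation is `y (4xy² - 4x³ - 2x - a) = 0`, and the
solution set is stable under conjugation. So it consists of the real roots of
`x⁴ - x² - ax - b` (at most four) and of conjugate pairs of non-real solutions, each pair
determined by its abscissa `x`. Eliminating `y²` shows that the abscissa is a root of the sextic
`P = 64x⁶ + 32x⁴ + 32ax³ + (16b - 12)x² - 8ax - a²`.

Since `z ↦ -z` exchanges `a` and `-a`, we may take `a ≤ 0`. Then `P / x²` is strictly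
decreasing on `x < 0`, and for `a < 0` its derivative is strictly increasing on `x > ρ`, where
`ρ` is the positive root of `4x³ + 2x + a` and every positive abscissa lies beyond `ρ`. By
Rolle's theorem there are at most `1 + 2` abscissae (for `a = 0`, at most one on each side of
`0` together with `0` itself), hence at most `4 + 2 · 3 = 10` solutions.
For the lower bound, `P(0) = -a² < 0` gives a negative abscissa; then either `P(ρ) < 0` gives a
second one beyond `ρ`, or the quartic is negative at `-ρ` and has two real roots. For `a = 0`
the abscissae solve a biquadratic equation.
-/

open Polynomial Set Filter

namespace Polynomial

theorem tendsto_atBot_of_even_natDegree {p : ℝ[X]} (hdeg : 0 < p.degree)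
    (heven : Even p.natDegree) (hlc : 0 ≤ p.leadingCoeff) :
    Tendsto (fun x => p.eval x) atBot atTop := by
  have h : Tendsto (fun x => (p.comp (-X)).eval x) atTop atTop :=
    (p.comp (-X)).tendsto_atTop_of_leadingCoeff_nonneg (by simpa using hdeg)
      (by simpa [heven.neg_one_pow] using hlc)
  simpa [Function.comp_def] using h.comp tendsto_neg_atBot_atTop

theorem encard_setOf_eval_eq_zero_le {p : ℝ[X]} (hp : p ≠ 0) :
    {x | p.eval x = 0}.encard ≤ p.natDegree := by
  classical
  have : {x | p.eval x = 0} = (p.roots.toFinset : Set ℝ) := by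
    ext x; simp [hp]
  rw [this, encard_coe_eq_coe_finsetCard, Nat.cast_le]
  exact p.roots.toFinset_card_le.trans p.card_roots'

theorem hasDerivAt_eval_div_pow (p : ℝ[X]) (n : ℕ) {x : ℝ} (hx : x ≠ 0) :
    HasDerivAt (fun y => p.eval y / y ^ n)
      ((X * derivative p - (n : ℝ[X]) * p).eval x / x ^ (n + 1)) x := by
  refine ((p.hasDerivAt x).div (hasDerivAt_pow n x) (pow_ne_zero n hx)).congr_deriv ?_
  rcases n with _ | n
  · simp [hx]
  · simp only [eval_sub, eval_mul, eval_X, eval_natCast, Nat.add_sub_cancel]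
    field_simp
    ring

end Polynomial

theorem Set.InjOn.encard_sep_eq_le_one {α β : Type*} {f : α → β} {s : Set α} (hf : InjOn f s)
    (c : β) : {x ∈ s | f x = c}.encard ≤ 1 :=
  encard_le_one_iff.2 fun _ _ hx hy => hf hx.1 hy.1 (hx.2.trans hy.2.symm)

theorem encard_sep_eq_zero_le_two_of_injOn_deriv {f f' : ℝ → ℝ} {s : Set ℝ}
    (hs : s.OrdConnected) (hf : ∀ x ∈ s, HasDerivAt f (f' x) x) (hf' : InjOn f' s) :
    {x ∈ s | f x = 0}.encard ≤ 2 := by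
  have rolle : ∀ x ∈ s, ∀ y ∈ s, f x = 0 → f y = 0 → x < y →
      ∃ ξ ∈ Ioo x y, ξ ∈ s ∧ f' ξ = 0 := by
    intro x hx y hy hfx hfy hxy
    obtain ⟨ξ, hξ, hf'ξ⟩ := exists_hasDerivAt_eq_zero hxy
      (fun t ht => (hf t (hs.out hx hy ht)).continuousAt.continuousWithinAt)
      (hfx.trans hfy.symm) (fun t ht => hf t (hs.out hx hy (Ioo_subset_Icc_self ht)))
    exact ⟨ξ, hξ, hs.out hx hy (Ioo_subset_Icc_self hξ), hf'ξ⟩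
  have between : ∀ x ∈ {x ∈ s | f x = 0}, ∀ y ∈ {x ∈ s | f x = 0}, x ≠ y →
      ∃ ξ ∈ s, f' ξ = 0 ∧ (x - ξ) * (y - ξ) < 0 := by
    rintro x ⟨hx, hfx⟩ y ⟨hy, hfy⟩ hxy
    rcases hxy.lt_or_gt with h | h
    · obtain ⟨ξ, ⟨hxξ, hξy⟩, hξ, hf'ξ⟩ := rolle x hx y hy hfx hfy h
      exact ⟨ξ, hξ, hf'ξ, mul_neg_of_neg_of_pos (by linarith) (by linarith)⟩
    · obtain ⟨ξ, ⟨hyξ, hξx⟩, hξ, hf'ξ⟩ := rolle y hy x hx hfy hfx h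
      exact ⟨ξ, hξ, hf'ξ, mul_neg_of_pos_of_neg (by linarith) (by linarith)⟩
  by_contra! h
  obtain ⟨t, hts, ht⟩ := exists_subset_encard_eq (Order.add_one_le_of_lt h)
  obtain ⟨x, y, z, hxy, hxz, hyz, rfl⟩ := encard_eq_three.1 ht
  obtain ⟨ξ, hξ, hf'ξ, hxyξ⟩ := between x (hts (by simp)) y (hts (by simp)) hxy
  obtain ⟨η, hη, hf'η, hxzη⟩ := between x (hts (by simp)) z (hts (by simp)) hxz
  obtain ⟨ζ, hζ, hf'ζ, hyzζ⟩ := between y (hts (by simp)) z (hts (by simp)) hyz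
  obtain rfl := hf' hξ hη (hf'ξ.trans hf'η.symm)
  obtain rfl := hf' hξ hζ (hf'ξ.trans hf'ζ.symm)
  -- the single critical point `ξ` would separate each of the three pairs of zeros
  nlinarith [mul_pos_of_neg_of_neg hxyξ hxzη, sq_nonneg (x - ξ)]

theorem strictMonoOn_of_hasDerivAt_pos {D : Set ℝ} (hD : Convex ℝ D) {f f' : ℝ → ℝ}
    (hf : ∀ x ∈ D, HasDerivAt f (f' x) x) (hf' : ∀ x ∈ D, 0 < f' x) : StrictMonoOn f D :=
  strictMonoOn_of_hasDerivWithinAt_pos hD (fun x hx => (hf x hx).continuousAt.continuousWithinAt)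
    (fun x hx => (hf x (interior_subset hx)).hasDerivWithinAt)
    (fun x hx => hf' x (interior_subset hx))

theorem strictAntiOn_of_hasDerivAt_neg {D : Set ℝ} (hD : Convex ℝ D) {f f' : ℝ → ℝ}
    (hf : ∀ x ∈ D, HasDerivAt f (f' x) x) (hf' : ∀ x ∈ D, f' x < 0) : StrictAntiOn f D :=
  strictAntiOn_of_hasDerivWithinAt_neg hD (fun x hx => (hf x hx).continuousAt.continuousWithinAt)
    (fun x hx => (hf x (interior_subset hx)).hasDerivWithinAt)
    (fun x hx => hf' x (interior_subset hx))

theorem exists_pos_pow_four_add_mul_sq_eq {p c : ℝ} (hp : 0 ≤ p) (hc : 0 < c) :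
    ∃ x > 0, x ^ 4 + p * x ^ 2 = c := by
  have hc' : c < (1 + c) ^ 4 + p * (1 + c) ^ 2 := by
    nlinarith [one_le_pow₀ (n := 3) (by linarith : (1 : ℝ) ≤ 1 + c),
      mul_nonneg hp (sq_nonneg (1 + c))]
  obtain ⟨x, hx, hxc⟩ := intermediate_value_Ioo (by linarith : (0 : ℝ) ≤ 1 + c)
    (by fun_prop : Continuous fun x : ℝ => x ^ 4 + p * x ^ 2).continuousOn
    ⟨by simpa using hc, hc'⟩
  exact ⟨x, hx.1, hxc⟩

noncomputable section

namespace ConjQuartic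

variable {a b x y : ℝ}

def solSet (a b : ℝ) : Set ℂ :=
  {z : ℂ | (starRingEnd ℂ z) ^ 4 = z ^ 2 + (a : ℂ) * z + (b : ℂ)}

def quartic (a b : ℝ) : ℝ[X] := X ^ 4 - X ^ 2 - C a * X - C b

def sextic (a b : ℝ) : ℝ[X] :=
  64 * X ^ 6 + 32 * X ^ 4 + C (32 * a) * X ^ 3 + C (16 * b - 12) * X ^ 2 - C (8 * a) * X - C (a ^ 2)

lemma eval_quartic : (quartic a b).eval x = x ^ 4 - x ^ 2 - a * x - b := by
  simp [quartic]

lemma eval_sextic : (sextic a b).eval x =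
    64 * x ^ 6 + 32 * x ^ 4 + 32 * a * x ^ 3 + (16 * b - 12) * x ^ 2 - 8 * a * x - a ^ 2 := by
  simp [sextic]

lemma natDegree_quartic : (quartic a b).natDegree = 4 := by
  unfold quartic; compute_degree!

lemma leadingCoeff_quartic : (quartic a b).leadingCoeff = 1 := by
  unfold quartic; monicity!

lemma natDegree_sextic : (sextic a b).natDegree = 6 := by
  unfold sextic; compute_degree!

lemma leadingCoeff_sextic : (sextic a b).leadingCoeff = 64 := by
  rw [leadingCoeff, natDegree_sextic]; unfold sextic; compute_degree!

lemma mem_solSet_iff {z : ℂ} : z ∈ solSet a b ↔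
    z.re ^ 4 - 6 * z.re ^ 2 * z.im ^ 2 + z.im ^ 4 = z.re ^ 2 - z.im ^ 2 + a * z.re + b ∧
      z.im * (4 * z.re * z.im ^ 2 - (4 * z.re ^ 3 + 2 * z.re + a)) = 0 := by
  obtain ⟨x, y⟩ := z
  have lhs : (starRingEnd ℂ ⟨x, y⟩) ^ 4 =
      ⟨x ^ 4 - 6 * x ^ 2 * y ^ 2 + y ^ 4, 4 * x * y ^ 3 - 4 * x ^ 3 * y⟩ := by
    apply Complex.ext <;> simp [pow_succ] <;> ring
  have rhs : (⟨x, y⟩ : ℂ) ^ 2 + (a : ℂ) * ⟨x, y⟩ + (b : ℂ) =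
      ⟨x ^ 2 - y ^ 2 + a * x + b, 2 * x * y + a * y⟩ :=
    Complex.ext (by simp [pow_two]) (by simp [pow_two]; ring)
  rw [solSet, mem_ofPred, lhs, rhs, Complex.mk.injEq]
  exact and_congr Iff.rfl ⟨fun h => by linear_combination h, fun h => by linear_combination h⟩

lemma conj_mem_solSet {z : ℂ} (hz : z ∈ solSet a b) : starRingEnd ℂ z ∈ solSet a b := by
  rw [mem_solSet_iff] at hz ⊢
  obtain ⟨h₁, h₂⟩ := hz
  simp only [Complex.conj_re, Complex.conj_im]
  constructor
  · linear_combination h₁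
  · linear_combination -h₂

lemma neg_mem_solSet_neg {z : ℂ} (hz : z ∈ solSet a b) : -z ∈ solSet (-a) b := by
  simp only [solSet, mem_ofPred, map_neg] at hz ⊢
  push_cast
  linear_combination hz

lemma ofReal_mem_solSet_iff : (x : ℂ) ∈ solSet a b ↔ (quartic a b).eval x = 0 := by
  rw [mem_solSet_iff, eval_quartic]
  simp only [Complex.ofReal_re, Complex.ofReal_im]
  constructor
  · rintro ⟨h, -⟩; linear_combination h
  · intro h; exact ⟨by linear_combination h, by ring⟩

def upperSol (a b : ℝ) : Set ℂ := {z ∈ solSet a b | 0 < z.im}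

lemma solSet_eq_union : solSet a b =
    (((↑) : ℝ → ℂ) '' {x | (quartic a b).eval x = 0} ∪ upperSol a b) ∪
      starRingEnd ℂ '' upperSol a b := by
  ext z
  constructor
  · intro hz
    rcases lt_trichotomy z.im 0 with h | h | h
    · refine Or.inr ⟨starRingEnd ℂ z, ⟨conj_mem_solSet hz, by simpa using h⟩, by simp⟩
    · refine Or.inl (Or.inl ⟨z.re, ?_, Complex.ext (by simp) (by simp [h])⟩)
      rw [mem_ofPred, ← ofReal_mem_solSet_iff]
      rwa [← Complex.re_add_im z, h, Complex.ofReal_zero, zero_mul, add_zero] at hz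
    · exact Or.inl (Or.inr ⟨hz, h⟩)
  · rintro ((⟨x, hx, rfl⟩ | hz) | ⟨w, hw, rfl⟩)
    · exact ofReal_mem_solSet_iff.2 hx
    · exact hz.1
    · exact conj_mem_solSet hw.1

lemma injOn_re_upperSol : InjOn Complex.re (upperSol a b) := by
  rintro ⟨x, y⟩ ⟨hz, hy⟩ ⟨x', y'⟩ ⟨hz', hy'⟩ (rfl : x = x')
  obtain ⟨h₁, h₂⟩ := mem_solSet_iff.1 hz
  obtain ⟨h₁', h₂'⟩ := mem_solSet_iff.1 hz'
  simp only at h₁ h₂ h₁' h₂' hy hy'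
  suffices y ^ 2 = y' ^ 2 by
    rw [Complex.mk.injEq]
    exact ⟨rfl, (pow_left_inj₀ hy.le hy'.le two_ne_zero).1 this⟩
  have e₁ : 4 * x * y ^ 2 = 4 * x ^ 3 + 2 * x + a := by
    linarith [(mul_eq_zero.1 h₂).resolve_left hy.ne']
  have e₂ : 4 * x * y' ^ 2 = 4 * x ^ 3 + 2 * x + a := by
    linarith [(mul_eq_zero.1 h₂').resolve_left hy'.ne']
  rcases eq_or_ne x 0 with rfl | hx
  · nlinarith [pow_pos hy 2, pow_pos hy' 2]
  · exact mul_left_cancel₀ (by positivity : 4 * x ≠ 0) (e₁.trans e₂.symm)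

lemma encard_solSet : (solSet a b).encard =
    {x | (quartic a b).eval x = 0}.encard + 2 * (Complex.re '' upperSol a b).encard := by
  have h₁ :
      Disjoint (((↑) : ℝ → ℂ) '' {x | (quartic a b).eval x = 0}) (upperSol a b) := by
    rw [disjoint_left]
    rintro _ ⟨x, -, rfl⟩ ⟨-, h⟩
    simp at h
  have h₂ : Disjoint (((↑) : ℝ → ℂ) '' {x | (quartic a b).eval x = 0} ∪ upperSol a b)
      (starRingEnd ℂ '' upperSol a b) := by
    rw [disjoint_left]
    rintro z hz ⟨w, ⟨-, hw⟩, rfl⟩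
    have : 0 ≤ (starRingEnd ℂ w).im := by
      rcases hz with ⟨x, -, hx⟩ | ⟨-, h⟩
      · simp [← hx]
      · exact h.le
    simp only [Complex.conj_im] at this
    linarith
  rw [solSet_eq_union, encard_union_eq h₂, encard_union_eq h₁,
    Complex.ofReal_injective.encard_image, (RingHom.injective _).encard_image,
    injOn_re_upperSol.encard_image, two_mul, add_assoc]

lemma encard_solSet_neg : (solSet (-a) b).encard = (solSet a b).encard := by
  have : solSet (-a) b = Neg.neg '' solSet a b := by
    ext z
    refine ⟨fun hz => ⟨-z, by simpa using neg_mem_solSet_neg hz, neg_neg z⟩, ?_⟩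
    rintro ⟨w, hw, rfl⟩
    exact neg_mem_solSet_neg hw
  rw [this, neg_injective.encard_image]

lemma eval_sextic_eq_zero
    (h₁ : x ^ 4 - 6 * x ^ 2 * y ^ 2 + y ^ 4 = x ^ 2 - y ^ 2 + a * x + b)
    (h₂ : 4 * x * y ^ 2 = 4 * x ^ 3 + 2 * x + a) : (sextic a b).eval x = 0 := by
  rw [eval_sextic]
  linear_combination (-16 * x ^ 2) * h₁ + (-20 * x ^ 3 + 6 * x + a + 4 * x * y ^ 2) * h₂

lemma exists_of_mem_re_image_upperSol (hx : x ∈ Complex.re '' upperSol a b) :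
    ∃ y > 0, 4 * x * y ^ 2 = 4 * x ^ 3 + 2 * x + a ∧ (sextic a b).eval x = 0 := by
  obtain ⟨z, ⟨hz, hy⟩, rfl⟩ := hx
  obtain ⟨h₁, h₂⟩ := mem_solSet_iff.1 hz
  have h₂' : 4 * z.re * z.im ^ 2 = 4 * z.re ^ 3 + 2 * z.re + a := by
    linarith [(mul_eq_zero.1 h₂).resolve_left hy.ne']
  exact ⟨z.im, hy, h₂', eval_sextic_eq_zero h₁ h₂'⟩

lemma mem_re_image_upperSol (hx : x ≠ 0) (hP : (sextic a b).eval x = 0)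
    (hg : 0 < x * (4 * x ^ 3 + 2 * x + a)) : x ∈ Complex.re '' upperSol a b := by
  set t := (4 * x ^ 3 + 2 * x + a) / (4 * x)
  have ht : 0 < t := by
    have : t = x * (4 * x ^ 3 + 2 * x + a) / (4 * x ^ 2) := by simp only [t]; field_simp
    rw [this]; positivity
  have h₂ : 4 * x * √t ^ 2 = 4 * x ^ 3 + 2 * x + a := by
    rw [Real.sq_sqrt ht.le]; simp only [t]; field_simp
  have h₁ : x ^ 4 - 6 * x ^ 2 * √t ^ 2 + √t ^ 4 = x ^ 2 - √t ^ 2 + a * x + b := by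
    refine mul_left_cancel₀ (by positivity : 16 * x ^ 2 ≠ 0) ?_
    rw [eval_sextic] at hP
    linear_combination -hP + (-20 * x ^ 3 + 6 * x + a + 4 * x * √t ^ 2) * h₂
  refine ⟨⟨x, √t⟩, ⟨mem_solSet_iff.2 ⟨h₁, ?_⟩, Real.sqrt_pos.2 ht⟩, rfl⟩
  simp only
  linear_combination √t * h₂

lemma zero_mem_re_image_upperSol (hy : 0 < y) (h : y ^ 4 + y ^ 2 = b) :
    0 ∈ Complex.re '' upperSol 0 b := by
  refine ⟨⟨0, y⟩, ⟨mem_solSet_iff.2 ⟨?_, ?_⟩, hy⟩, rfl⟩ <;> simp only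
  · linear_combination h
  · ring

def sexticQuot (a b x : ℝ) : ℝ := (sextic a b).eval x / x ^ 2

def sexticQuotDeriv (a x : ℝ) : ℝ :=
  (256 * x ^ 6 + 64 * x ^ 4 + 32 * a * x ^ 3 + 8 * a * x + 2 * a ^ 2) / x ^ 3

lemma hasDerivAt_sexticQuot (hx : x ≠ 0) :
    HasDerivAt (sexticQuot a b) (sexticQuotDeriv a x) x := by
  refine ((sextic a b).hasDerivAt_eval_div_pow 2 hx).congr_deriv ?_
  simp [sexticQuotDeriv, sextic, derivative_pow]
  ring

lemma hasDerivAt_sexticQuotDeriv (hx : x ≠ 0) :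
    HasDerivAt (sexticQuotDeriv a)
      ((768 * x ^ 6 + 64 * x ^ 4 - 16 * a * x - 6 * a ^ 2) / x ^ 4) x := by
  convert (256 * X ^ 6 + 64 * X ^ 4 + C (32 * a) * X ^ 3 + C (8 * a) * X + C (2 * a ^ 2) :
    ℝ[X]).hasDerivAt_eval_div_pow 3 hx using 1
  · ext y; simp [sexticQuotDeriv]
  · simp [derivative_pow]; ring

lemma strictAntiOn_sexticQuot (ha : a ≤ 0) : StrictAntiOn (sexticQuot a b) (Iio 0) := by
  refine strictAntiOn_of_hasDerivAt_neg (convex_Iio 0)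
    (fun x hx => hasDerivAt_sexticQuot (ne_of_lt hx)) (fun x (hx : x < 0) => ?_)
  refine div_neg_of_pos_of_neg ?_ (Odd.pow_neg (by decide) hx)
  nlinarith [pow_pos (neg_pos.2 hx) 3, pow_pos (neg_pos.2 hx) 4, pow_pos (neg_pos.2 hx) 6,
    mul_nonneg (neg_nonneg.2 ha) (pow_pos (neg_pos.2 hx) 3).le,
    mul_nonneg (neg_nonneg.2 ha) (neg_pos.2 hx).le, sq_nonneg a]

lemma strictMonoOn_sexticQuot_zero : StrictMonoOn (sexticQuot 0 b) (Ioi 0) := by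
  refine strictMonoOn_of_hasDerivAt_pos (convex_Ioi 0)
    (fun x hx => hasDerivAt_sexticQuot (ne_of_gt hx)) (fun x (hx : 0 < x) => ?_)
  norm_num [sexticQuotDeriv]
  positivity

lemma strictMonoOn_sexticQuotDeriv {ρ : ℝ} (hρ : 0 < ρ) (hgρ : 4 * ρ ^ 3 + 2 * ρ + a = 0) :
    StrictMonoOn (sexticQuotDeriv a) (Ioi ρ) := by
  refine strictMonoOn_of_hasDerivAt_pos (convex_Ioi ρ)
    (fun x (hx : ρ < x) => hasDerivAt_sexticQuotDeriv (by linarith)) (fun x (hx : ρ < x) => ?_)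
  obtain rfl : a = -(4 * ρ ^ 3 + 2 * ρ) := by linarith
  refine div_pos ?_ (pow_pos (hρ.trans hx) 4)
  have h₆ : ρ ^ 6 ≤ x ^ 6 := pow_le_pow_left₀ hρ.le hx.le 6
  have h₄ : ρ ^ 4 ≤ x ^ 4 := pow_le_pow_left₀ hρ.le hx.le 4
  nlinarith [pow_pos hρ 6, pow_pos hρ 4, pow_pos hρ 2, mul_le_mul_of_nonneg_left hx.le hρ.le,
    mul_le_mul_of_nonneg_left hx.le (pow_pos hρ 3).le]

lemma exists_pos_root_cubic (ha : a < 0) : ∃ ρ > 0, 4 * ρ ^ 3 + 2 * ρ + a = 0 := by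
  obtain ⟨ρ, hρ, hgρ⟩ := intermediate_value_Ioo (by linarith : (0 : ℝ) ≤ -a)
    (by fun_prop : Continuous fun x : ℝ => 4 * x ^ 3 + 2 * x + a).continuousOn
    ⟨by simpa using ha, by nlinarith [pow_pos (neg_pos.2 ha) 3]⟩
  exact ⟨ρ, hρ.1, hgρ⟩

lemma sexticQuot_eq_zero_of_mem (hx : x ∈ Complex.re '' upperSol a b) : sexticQuot a b x = 0 := by
  obtain ⟨-, -, -, hP⟩ := exists_of_mem_re_image_upperSol hx
  simp [sexticQuot, hP]

lemma encard_re_image_upperSol_le_of_neg (ha : a < 0) :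
    (Complex.re '' upperSol a b).encard ≤ 3 := by
  obtain ⟨ρ, hρ, hgρ⟩ := exists_pos_root_cubic ha
  have hsub : Complex.re '' upperSol a b ⊆
      {x ∈ Iio 0 | sexticQuot a b x = 0} ∪ {x ∈ Ioi ρ | sexticQuot a b x = 0} := by
    intro x hx
    obtain ⟨y, hy, h₂, -⟩ := exists_of_mem_re_image_upperSol hx
    rcases lt_trichotomy x 0 with hx₀ | rfl | hx₀
    · exact Or.inl ⟨hx₀, sexticQuot_eq_zero_of_mem hx⟩
    · linarith
    · refine Or.inr ⟨?_, sexticQuot_eq_zero_of_mem hx⟩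
      rw [mem_Ioi]
      by_contra! hxρ
      nlinarith [mul_pos (mul_pos hx₀ hx₀) (pow_pos hy 2), mul_nonneg (sub_nonneg.2 hxρ)
        (by positivity : 0 ≤ 4 * (x ^ 2 + x * ρ + ρ ^ 2) + 2)]
  calc (Complex.re '' upperSol a b).encard
      ≤ ({x ∈ Iio 0 | sexticQuot a b x = 0} ∪ {x ∈ Ioi ρ | sexticQuot a b x = 0}).encard :=
        encard_le_encard hsub
    _ ≤ 1 + 2 := (encard_union_le _ _).trans (add_le_add
        ((strictAntiOn_sexticQuot ha.le).injOn.encard_sep_eq_le_one 0)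
        (encard_sep_eq_zero_le_two_of_injOn_deriv ordConnected_Ioi
          (fun x (hx : ρ < x) => hasDerivAt_sexticQuot (by linarith))
          (strictMonoOn_sexticQuotDeriv hρ hgρ).injOn))
    _ = 3 := by norm_num

lemma encard_re_image_upperSol_zero_le : (Complex.re '' upperSol 0 b).encard ≤ 3 := by
  have hsub : Complex.re '' upperSol 0 b ⊆
      ({x ∈ Iio 0 | sexticQuot 0 b x = 0} ∪ {x ∈ Ioi 0 | sexticQuot 0 b x = 0}) ∪ {0} := by
    intro x hx
    rcases lt_trichotomy x 0 with hx₀ | rfl | hx₀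
    · exact Or.inl (Or.inl ⟨hx₀, sexticQuot_eq_zero_of_mem hx⟩)
    · exact Or.inr rfl
    · exact Or.inl (Or.inr ⟨hx₀, sexticQuot_eq_zero_of_mem hx⟩)
  calc (Complex.re '' upperSol 0 b).encard
      ≤ (({x ∈ Iio 0 | sexticQuot 0 b x = 0} ∪ {x ∈ Ioi 0 | sexticQuot 0 b x = 0}) ∪
          {0}).encard := encard_le_encard hsub
    _ ≤ 1 + 1 + 1 := (encard_union_le _ _).trans (add_le_add ((encard_union_le _ _).trans
        (add_le_add ((strictAntiOn_sexticQuot le_rfl).injOn.encard_sep_eq_le_one 0)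
          (strictMonoOn_sexticQuot_zero.injOn.encard_sep_eq_le_one 0)))
        (encard_singleton _).le)
    _ = 3 := by norm_num

lemma quartic_ne_zero : quartic a b ≠ 0 := by
  intro h; simpa [h] using natDegree_quartic (a := a) (b := b)

lemma tendsto_quartic_atTop : Tendsto (fun x => (quartic a b).eval x) atTop atTop :=
  tendsto_atTop_of_leadingCoeff_nonneg _
    (natDegree_pos_iff_degree_pos.1 (by rw [natDegree_quartic]; norm_num))
    (by rw [leadingCoeff_quartic]; norm_num)

lemma tendsto_quartic_atBot : Tendsto (fun x => (quartic a b).eval x) atBot atTop :=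
  tendsto_atBot_of_even_natDegree
    (natDegree_pos_iff_degree_pos.1 (by rw [natDegree_quartic]; norm_num))
    (by rw [natDegree_quartic]; decide) (by rw [leadingCoeff_quartic]; norm_num)

lemma tendsto_sextic_atTop : Tendsto (fun x => (sextic a b).eval x) atTop atTop :=
  tendsto_atTop_of_leadingCoeff_nonneg _
    (natDegree_pos_iff_degree_pos.1 (by rw [natDegree_sextic]; norm_num))
    (by rw [leadingCoeff_sextic]; norm_num)

lemma tendsto_sextic_atBot : Tendsto (fun x => (sextic a b).eval x) atBot atTop :=
  tendsto_atBot_of_even_natDegree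
    (natDegree_pos_iff_degree_pos.1 (by rw [natDegree_sextic]; norm_num))
    (by rw [natDegree_sextic]; decide) (by rw [leadingCoeff_sextic]; norm_num)

lemma one_lt_encard_quartic_roots {c : ℝ} (hc : (quartic a b).eval c < 0) :
    1 < {x | (quartic a b).eval x = 0}.encard := by
  obtain ⟨r₁, hr₁ : r₁ < c, h₁⟩ :=
    intermediate_value_Iio' (quartic a b).continuous.continuousOn tendsto_quartic_atBot hc
  obtain ⟨r₂, hr₂ : c < r₂, h₂⟩ :=
    intermediate_value_Ioi (quartic a b).continuous.continuousOn tendsto_quartic_atTop hc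
  exact one_lt_encard_iff.2 ⟨r₁, r₂, h₁, h₂, by linarith⟩

lemma exists_neg_mem_re_image_upperSol (ha : a < 0) :
    ∃ x < 0, x ∈ Complex.re '' upperSol a b := by
  have h₀ : (sextic a b).eval 0 < 0 := by simp [eval_sextic]; nlinarith
  obtain ⟨x, hx : x < 0, hP⟩ := intermediate_value_Iio' (sextic a b).continuous.continuousOn
    tendsto_sextic_atBot h₀
  exact ⟨x, hx, mem_re_image_upperSol hx.ne hP
    (mul_pos_of_neg_of_neg hx (by nlinarith [Odd.pow_neg (by decide : Odd 3) hx]))⟩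

lemma exists_gt_mem_re_image_upperSol {ρ : ℝ} (hρ : 0 < ρ) (hgρ : 4 * ρ ^ 3 + 2 * ρ + a = 0)
    (hb : b < 5 * ρ ^ 4 + ρ ^ 2) : ∃ x > ρ, x ∈ Complex.re '' upperSol a b := by
  have hρ' : (sextic a b).eval ρ < 0 := by
    have : (sextic a b).eval ρ = 16 * ρ ^ 2 * (b - 5 * ρ ^ 4 - ρ ^ 2) := by
      rw [eval_sextic]; linear_combination (-(a - 36 * ρ ^ 3 + 6 * ρ)) * hgρ
    rw [this]
    exact mul_neg_of_pos_of_neg (by positivity) (by linarith)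
  obtain ⟨x, hx : ρ < x, hP⟩ := intermediate_value_Ioi (sextic a b).continuous.continuousOn
    tendsto_sextic_atTop hρ'
  have hx₀ : 0 < x := hρ.trans hx
  refine ⟨x, hx, mem_re_image_upperSol hx₀.ne' hP (mul_pos hx₀ ?_)⟩
  nlinarith [mul_pos (sub_pos.2 hx) (by positivity : 0 < 4 * (x ^ 2 + x * ρ + ρ ^ 2) + 2)]

lemma one_lt_encard_re_image_upperSol_zero (hb : b < 3 / 4) :
    1 < (Complex.re '' upperSol 0 b).encard := by
  obtain ⟨x, hx, hxb⟩ := exists_pos_pow_four_add_mul_sq_eq (p := 1 / 2) (by norm_num)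
    (by linarith : 0 < (3 - 4 * b) / 16)
  have mem : ∀ x' : ℝ, x' ^ 2 = x ^ 2 → x' ∈ Complex.re '' upperSol 0 b := by
    intro x' hx'
    have hx'₀ : x' ≠ 0 := by rintro rfl; nlinarith
    refine mem_re_image_upperSol hx'₀ ?_ ?_
    · rw [eval_sextic]
      linear_combination (64 * x' ^ 2) * hxb + (64 * x' ^ 2 * (x' ^ 2 + x ^ 2 + 1 / 2)) * hx'
    · nlinarith [pow_pos (sq_pos_of_ne_zero hx'₀) 2, sq_pos_of_ne_zero hx'₀]
  exact one_lt_encard_iff.2 ⟨x, -x, mem x rfl, mem (-x) (neg_sq x), by linarith⟩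

lemma zero_mem_re_image_upperSol_zero (hb : 0 < b) : 0 ∈ Complex.re '' upperSol 0 b := by
  obtain ⟨y, hy, hyb⟩ := exists_pos_pow_four_add_mul_sq_eq (p := 1) zero_le_one hb
  exact zero_mem_re_image_upperSol hy (by linarith)

lemma encard_solSet_le_ten (ha : a ≤ 0) : (solSet a b).encard ≤ 10 := by
  have hR : {x | (quartic a b).eval x = 0}.encard ≤ 4 := by
    simpa [natDegree_quartic] using encard_setOf_eval_eq_zero_le (quartic_ne_zero (a := a) (b := b))
  have hU : (Complex.re '' upperSol a b).encard ≤ 3 := by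
    rcases ha.lt_or_eq with ha | rfl
    · exact encard_re_image_upperSol_le_of_neg ha
    · exact encard_re_image_upperSol_zero_le
  rw [encard_solSet]
  calc {x | (quartic a b).eval x = 0}.encard + 2 * (Complex.re '' upperSol a b).encard
      ≤ 4 + 2 * 3 := by gcongr
    _ = 10 := by norm_num

lemma one_lt_encard_re_image_upperSol_or_quartic_roots (ha : a ≤ 0) :
    1 < (Complex.re '' upperSol a b).encard ∨
      (Complex.re '' upperSol a b).Nonempty ∧ 1 < {x | (quartic a b).eval x = 0}.encard := by
  rcases ha.lt_or_eq with ha | rfl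
  · obtain ⟨ρ, hρ, hgρ⟩ := exists_pos_root_cubic ha
    obtain ⟨x₁, hx₁, hx₁U⟩ := exists_neg_mem_re_image_upperSol (b := b) ha
    by_cases hb : b < 5 * ρ ^ 4 + ρ ^ 2
    · obtain ⟨x₂, hx₂, hx₂U⟩ := exists_gt_mem_re_image_upperSol hρ hgρ hb
      exact Or.inl (one_lt_encard_iff.2 ⟨x₁, x₂, hx₁U, hx₂U, by linarith⟩)
    · refine Or.inr ⟨⟨x₁, hx₁U⟩, one_lt_encard_quartic_roots (c := -ρ) ?_⟩
      rw [eval_quartic]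
      nlinarith [pow_pos hρ 4, pow_pos hρ 2]
  · by_cases hb : b < 3 / 4
    · exact Or.inl (one_lt_encard_re_image_upperSol_zero hb)
    · refine Or.inr ⟨⟨0, zero_mem_re_image_upperSol_zero (by linarith)⟩,
        one_lt_encard_quartic_roots (c := 0) ?_⟩
      simp only [eval_quartic]
      linarith

lemma four_le_encard_solSet (ha : a ≤ 0) : 4 ≤ (solSet a b).encard := by
  rw [encard_solSet]
  rcases one_lt_encard_re_image_upperSol_or_quartic_roots (b := b) ha with h | ⟨h₁, h₂⟩
  · calc (4 : ℕ∞) = 2 * 2 := by norm_num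
      _ ≤ 2 * (Complex.re '' upperSol a b).encard := by gcongr; exact Order.add_one_le_of_lt h
      _ ≤ _ := le_add_self
  · calc (4 : ℕ∞) = 2 + 2 * 1 := by norm_num
      _ ≤ _ := by
        gcongr
        · exact Order.add_one_le_of_lt h₂
        · exact one_le_encard_iff_nonempty.2 h₁

end ConjQuartic

end

open ConjQuartic in
/-- for all real `a, b`, the solution set of
`conj z ^ 4 = z ^ 2 + a z + b` is finite with between 4 and 10 elements. -/
theorem stmt_12 (a b : ℝ) :
    {z : ℂ | (starRingEnd ℂ z) ^ 4 = z ^ 2 + (a : ℂ) * z + (b : ℂ)}.Finite ∧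
      4 ≤ {z : ℂ | (starRingEnd ℂ z) ^ 4 = z ^ 2 + (a : ℂ) * z + (b : ℂ)}.ncard ∧
      {z : ℂ | (starRingEnd ℂ z) ^ 4 = z ^ 2 + (a : ℂ) * z + (b : ℂ)}.ncard ≤ 10 := by
  change (solSet a b).Finite ∧ 4 ≤ (solSet a b).ncard ∧ (solSet a b).ncard ≤ 10
  have bounds : 4 ≤ (solSet a b).encard ∧ (solSet a b).encard ≤ 10 := by
    rcases le_total a 0 with ha | ha
    · exact ⟨four_le_encard_solSet ha, encard_solSet_le_ten ha⟩
    · rw [← neg_neg a, encard_solSet_neg]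
      exact ⟨four_le_encard_solSet (neg_nonpos.2 ha), encard_solSet_le_ten (neg_nonpos.2 ha)⟩
  obtain ⟨hfin, hle⟩ := encard_le_coe_iff_finite_ncard_le.1 bounds.2
  refine ⟨hfin, ?_, hle⟩
  exact_mod_cast hfin.cast_ncard_eq ▸ bounds.1
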